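/- A CSF W is a Random Performance Function if and only if it satisfies e-Continuity, p-Continuity, Monotonicity, Competitiveness, and Co-monotonicity. -/

import Mathlib

open MeasureTheory Set Filter Topology

noncomputable section

/-- A family of performance CDFs `{F_e}` as in Definition 2 (RPF):
each `F e` is a continuous strictly increasing CDF, and for each `x`
the map `e ↦ F e x` is continuous, strictly decreasing on `(0,∞)`,
and tends to `0` as `e → ∞`. -/
def IsCDFfam (F : ℝ → ℝ → ℝ) : Prop :=
  (∀ e ∈ Set.Ioi (0:ℝ), Continuous (F e) ∧ StrictMono (F e) ∧
    Filter.Tendsto (F e) Filter.atBot (nhds 0) ∧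
    Filter.Tendsto (F e) Filter.atTop (nhds 1)) ∧
  (∀ x : ℝ, ContinuousOn (fun e => F e x) (Set.Ioi 0) ∧
    StrictAntiOn (fun e => F e x) (Set.Ioi 0) ∧
    Filter.Tendsto (fun e => F e x) Filter.atTop (nhds 0))

/-- `p ∈ Δ_k`: a Borel measure on `E = (0,∞)` (modeled as a measure on `ℝ`
giving no mass to `(-∞,0]`) with total mass in `(k, 1]`. -/
def MemDelta (k : ℝ) (p : MeasureTheory.Measure ℝ) : Prop :=
  p (Set.Iic 0) = 0 ∧ ENNReal.ofReal k < p Set.univ ∧ p Set.univ ≤ 1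

/-- A contest success function with budget `k`. -/
def IsCSF (k : ℝ) (W : ℝ → MeasureTheory.Measure ℝ → ℝ) : Prop :=
  ∀ p : MeasureTheory.Measure ℝ, MemDelta k p →
    (∀ e ∈ Set.Ioi (0:ℝ), W e p ∈ Set.Icc (0:ℝ) 1) ∧
    Measurable (fun e => W e p) ∧ (∫ e, W e p ∂p) = k

/-- Random Performance Function: `W e p = 1 - F e (s p)` where the cutoff
`s p` solves the market-clearing equation. -/
def IsRPF (k : ℝ) (W : ℝ → MeasureTheory.Measure ℝ → ℝ) : Prop :=
  ∃ F : ℝ → ℝ → ℝ, IsCDFfam F ∧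
    ∀ p : MeasureTheory.Measure ℝ, MemDelta k p → ∃ s : ℝ,
      (∫ e, (1 - F e s) ∂p) = k ∧ ∀ e ∈ Set.Ioi (0:ℝ), W e p = 1 - F e s

/-- Co-monotonicity. -/
def CoMonotone (k : ℝ) (W : ℝ → MeasureTheory.Measure ℝ → ℝ) : Prop :=
  ∀ e ∈ Set.Ioi (0:ℝ), ∀ e' ∈ Set.Ioi (0:ℝ), ∀ p p' : MeasureTheory.Measure ℝ,
    MemDelta k p → MemDelta k p' → W e p' ≤ W e p → W e' p' ≤ W e' p

/-- Monotonicity. -/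
def CSFMonotone (k : ℝ) (W : ℝ → MeasureTheory.Measure ℝ → ℝ) : Prop :=
  ∀ p : MeasureTheory.Measure ℝ, MemDelta k p →
    StrictMonoOn (fun e => W e p) (Set.Ioi 0) ∧
    Filter.Tendsto (fun e => W e p) Filter.atTop (nhds 1)

/-- Competitiveness. -/
def CSFCompetitive (k : ℝ) (W : ℝ → MeasureTheory.Measure ℝ → ℝ) : Prop :=
  ∀ e ∈ Set.Ioi (0:ℝ),
    Filter.Tendsto (fun eb => W e (MeasureTheory.Measure.dirac eb)) Filter.atTop (nhds 0)

/-- The mixture `α p + (1-α) p'`. -/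
def mix (α : ℝ) (p p' : MeasureTheory.Measure ℝ) : MeasureTheory.Measure ℝ :=
  ENNReal.ofReal α • p + ENNReal.ofReal (1 - α) • p'

/-- p-Continuity. -/
def PContinuousCSF (k : ℝ) (W : ℝ → MeasureTheory.Measure ℝ → ℝ) : Prop :=
  ∀ e ∈ Set.Ioi (0:ℝ), ∀ p p' : MeasureTheory.Measure ℝ,
    MemDelta k p → MemDelta k p' →
    ContinuousOn (fun α => W e (mix α p p')) (Set.Icc 0 1)

/-- e-Continuity. -/
def EContinuous (k : ℝ) (W : ℝ → MeasureTheory.Measure ℝ → ℝ) : Prop :=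
  ∀ p : MeasureTheory.Measure ℝ, MemDelta k p →
    ContinuousOn (fun e => W e p) (Set.Ioi 0)

/-- The right-shift `p ∔ a`. -/
def shift (p : MeasureTheory.Measure ℝ) (a : ℝ) : MeasureTheory.Measure ℝ :=
  MeasureTheory.Measure.map (fun x => x + a) p

/-- A single continuous strictly increasing CDF on `ℝ`. -/
def IsCDF (F : ℝ → ℝ) : Prop :=
  Continuous F ∧ StrictMono F ∧
  Filter.Tendsto F Filter.atBot (nhds 0) ∧ Filter.Tendsto F Filter.atTop (nhds 1)

/-- `F` represents `W` as an additive RPF: `W e p = 1 - F (s p - e)`. -/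
def RepresentsA (k : ℝ) (W : ℝ → MeasureTheory.Measure ℝ → ℝ) (F : ℝ → ℝ) : Prop :=
  ∀ p : MeasureTheory.Measure ℝ, MemDelta k p → ∃ s : ℝ,
    (∫ e, (1 - F (s - e)) ∂p) = k ∧ ∀ e ∈ Set.Ioi (0:ℝ), W e p = 1 - F (s - e)

/-- Additive RPF. -/
def IsARPF (k : ℝ) (W : ℝ → MeasureTheory.Measure ℝ → ℝ) : Prop :=
  ∃ F : ℝ → ℝ, IsCDF F ∧ RepresentsA k W F

/-- Invariance to Common Shifts. -/
def InvCommonShifts (k : ℝ) (W : ℝ → MeasureTheory.Measure ℝ → ℝ) : Prop :=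
  ∀ e ∈ Set.Ioi (0:ℝ), ∀ a ∈ Set.Ioi (0:ℝ), ∀ p : MeasureTheory.Measure ℝ,
    MemDelta k p → W e p = W (e + a) (shift p a)

/-- Invariance to p Shifts. -/
def InvPShifts (k : ℝ) (W : ℝ → MeasureTheory.Measure ℝ → ℝ) : Prop :=
  ∀ e ∈ Set.Ioi (0:ℝ), ∀ e' ∈ Set.Ioi (0:ℝ), ∀ a ∈ Set.Ioi (0:ℝ),
    ∀ p p' : MeasureTheory.Measure ℝ, MemDelta k p → MemDelta k p' →
    W e p = W e' p' → W e (shift p a) = W e' (shift p' a)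

/-!
For an RPF, `W e p = 1 - F e (s p)` and each axiom is inherited from the family `F`. The one
non-trivial case is p-continuity: along a mixture the cutoff `s` is the zero of a demand
`t ↦ ∫ (1 - F u t) dp` that is strictly decreasing in `t` and affine in the mixing weight, so it
moves continuously.

Conversely, co-monotonicity says that the share `W 1 p` at a reference effort determines the whole
function `W · p`, monotonically. Scaled and far-away Dirac masses, together with the intermediate
value theorem along mixtures, show that every share in `(0, 1)` occurs. Indexing these levels by
`x ∈ ℝ` and setting `F e x := 1 - W e p_x` gives, for each `e`, a strictly increasing function with
range `(0, 1)`, hence a continuous CDF, and `s p` is the index of the level of `p`.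
-/

lemma isCDF_of_strictMono_of_range_eq {f : ℝ → ℝ} (hf : StrictMono f)
    (hrange : range f = Ioo 0 1) : IsCDF f := by
  refine ⟨continuous_iff_continuousAt.2 fun x => ?_, hf, ?_, ?_⟩
  · refine continuousAt_of_monotoneOn_of_image_mem_nhds (hf.monotone.monotoneOn univ) univ_mem ?_
    rw [image_univ, hrange]
    exact isOpen_Ioo.mem_nhds (hrange ▸ mem_range_self x)
  · exact tendsto_atBot_isGLB hf.monotone (hrange ▸ isGLB_Ioo zero_lt_one)
  · exact tendsto_atTop_isLUB hf.monotone (hrange ▸ isLUB_Ioo zero_lt_one)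

lemma continuousOn_of_strictAnti_of_apply_eq {X β γ : Type*} [TopologicalSpace X]
    [LinearOrder β] [TopologicalSpace β] [OrderTopology β]
    [LinearOrder γ] [TopologicalSpace γ] [OrderClosedTopology γ]
    {I : Set X} {G : X → β → γ} {s : X → β} {c : γ}
    (hanti : ∀ x ∈ I, StrictAnti (G x)) (hcont : ∀ t, ContinuousOn (fun x => G x t) I)
    (hs : ∀ x ∈ I, G x (s x) = c) : ContinuousOn s I := by
  intro x₀ hx₀
  rw [ContinuousWithinAt, tendsto_order]
  constructor
  · intro b hb
    have hlt : c < G x₀ b := hs x₀ hx₀ ▸ hanti x₀ hx₀ hb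
    filter_upwards [hcont b x₀ hx₀ (Ioi_mem_nhds hlt), self_mem_nhdsWithin] with x hx hxI
    exact (hanti x hxI).lt_iff_gt.1 (hs x hxI ▸ hx)
  · intro b hb
    have hlt : G x₀ b < c := hs x₀ hx₀ ▸ hanti x₀ hx₀ hb
    filter_upwards [hcont b x₀ hx₀ (Iio_mem_nhds hlt), self_mem_nhdsWithin] with x hx hxI
    exact (hanti x hxI).lt_iff_gt.1 (hs x hxI ▸ hx)

lemma integral_lt_integral_of_ae_lt {α : Type*} [MeasurableSpace α] {μ : Measure α} [NeZero μ]
    {f g : α → ℝ} (hf : Integrable f μ) (hg : Integrable g μ) (hfg : ∀ᵐ x ∂μ, f x < g x) :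
    ∫ x, f x ∂μ < ∫ x, g x ∂μ := by
  rw [← sub_pos, ← integral_sub hg hf,
    integral_pos_iff_support_of_nonneg_ae (hfg.mono fun x hx => (sub_pos.2 hx).le) (hg.sub hf)]
  have hsupp : (Function.support fun x => g x - f x) =ᵐ[μ] univ := by
    refine ae_eq_univ.2 (measure_mono_null (fun x hx => ?_) (ae_iff.1 hfg))
    simp_all [sub_eq_zero]
  rw [measure_congr hsupp]
  exact Measure.measure_univ_pos.2 (NeZero.ne μ)

namespace MemDelta

variable {k : ℝ} {p : Measure ℝ}

lemma ae_pos (hp : MemDelta k p) : ∀ᵐ u ∂p, 0 < u :=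
  measure_mono_null (fun u (hu : ¬ 0 < u) => le_of_not_gt hu) hp.1

lemma isFiniteMeasure (hp : MemDelta k p) : IsFiniteMeasure p :=
  ⟨hp.2.2.trans_lt ENNReal.one_lt_top⟩

lemma neZero (hp : MemDelta k p) : NeZero p :=
  ⟨Measure.measure_univ_ne_zero.1 (pos_of_gt hp.2.1).ne'⟩

lemma integral_congr (hp : MemDelta k p) {f g : ℝ → ℝ} (hfg : ∀ u ∈ Ioi (0:ℝ), f u = g u) :
    ∫ u, f u ∂p = ∫ u, g u ∂p :=
  integral_congr_ae (hp.ae_pos.mono hfg)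

end MemDelta

lemma memDelta_mix {k α : ℝ} {p p' : Measure ℝ} (hp : MemDelta k p) (hp' : MemDelta k p')
    (hα : α ∈ Icc (0:ℝ) 1) : MemDelta k (mix α p p') := by
  have hmix : ∀ s, mix α p p' s = ENNReal.ofReal α * p s + ENNReal.ofReal (1 - α) * p' s :=
    fun s => rfl
  have hsum : ENNReal.ofReal α + ENNReal.ofReal (1 - α) = 1 := by
    rw [← ENNReal.ofReal_add hα.1 (sub_nonneg.2 hα.2), add_sub_cancel, ENNReal.ofReal_one]
  refine ⟨by simp [hmix, hp.1, hp'.1], ?_, ?_⟩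
  · rcases hα.2.eq_or_lt with rfl | hα1
    · simpa [hmix] using hp.2.1
    · have hne : ENNReal.ofReal (1 - α) ≠ 0 := by simpa using hα1
      calc ENNReal.ofReal k
          = ENNReal.ofReal α * ENNReal.ofReal k + ENNReal.ofReal (1 - α) * ENNReal.ofReal k := by
            rw [← add_mul, hsum, one_mul]
        _ < ENNReal.ofReal α * p univ + ENNReal.ofReal (1 - α) * p' univ :=
            ENNReal.add_lt_add_of_le_of_lt (by finiteness) (mul_le_mul_right hp.2.1.le _)
              ((ENNReal.mul_lt_mul_iff_right hne ENNReal.ofReal_ne_top).2 hp'.2.1)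
        _ = mix α p p' univ := (hmix univ).symm
  · calc mix α p p' univ ≤ ENNReal.ofReal α * 1 + ENNReal.ofReal (1 - α) * 1 := by
          rw [hmix]; gcongr; exacts [hp.2.2, hp'.2.2]
      _ = 1 := by rw [mul_one, mul_one, hsum]

lemma integral_mix {α : ℝ} {p p' : Measure ℝ} {f : ℝ → ℝ} (hf : Integrable f p)
    (hf' : Integrable f p') (hα : α ∈ Icc (0:ℝ) 1) :
    ∫ u, f u ∂(mix α p p') = α * ∫ u, f u ∂p + (1 - α) * ∫ u, f u ∂p' := by
  rw [mix, integral_add_measure (hf.smul_measure ENNReal.ofReal_ne_top)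
    (hf'.smul_measure ENNReal.ofReal_ne_top), integral_smul_measure, integral_smul_measure,
    ENNReal.toReal_ofReal hα.1, ENNReal.toReal_ofReal (sub_nonneg.2 hα.2), smul_eq_mul, smul_eq_mul]

lemma memDelta_smul_dirac {k b c : ℝ} (hk : 0 ≤ k) (hb : 0 < b) (hkc : k < c) (hc : c ≤ 1) :
    MemDelta k (ENNReal.ofReal c • Measure.dirac b) := by
  refine ⟨by simp [hb], ?_, ?_⟩
  · simpa using (ENNReal.ofReal_lt_ofReal_iff (hk.trans_lt hkc)).2 hkc
  · simpa using hc

lemma memDelta_dirac {k b : ℝ} (hk : k < 1) (hb : 0 < b) : MemDelta k (Measure.dirac b) :=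
  ⟨by simp [hb], by simpa using hk, by simp⟩

namespace IsCDFfam

variable {F : ℝ → ℝ → ℝ} {k : ℝ} {p : Measure ℝ} {W : ℝ → Measure ℝ → ℝ} {s : Measure ℝ → ℝ}

lemma mem_Icc (hF : IsCDFfam F) {e : ℝ} (he : 0 < e) (x : ℝ) : F e x ∈ Icc 0 1 :=
  ⟨(hF.1 e he).2.1.monotone.le_of_tendsto (hF.1 e he).2.2.1 x,
    (hF.1 e he).2.1.monotone.ge_of_tendsto (hF.1 e he).2.2.2 x⟩

lemma integrable_one_sub (hF : IsCDFfam F) (hp : MemDelta k p) (t : ℝ) :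
    Integrable (fun u => 1 - F u t) p := by
  have := hp.isFiniteMeasure
  have hmeas : AEMeasurable (fun u => F u t) p := by
    rw [← Measure.restrict_eq_self_of_ae_mem hp.ae_pos]
    exact (hF.2 t).1.aemeasurable measurableSet_Ioi
  refine Integrable.mono' (integrable_const 1) (aestronglyMeasurable_const.sub
    hmeas.aestronglyMeasurable) (hp.ae_pos.mono fun u hu => ?_)
  have := hF.mem_Icc hu t
  rw [Real.norm_eq_abs, abs_le]
  constructor <;> linarith [this.1, this.2]

lemma strictAnti_integral_one_sub (hF : IsCDFfam F) (hp : MemDelta k p) :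
    StrictAnti fun t => ∫ u, (1 - F u t) ∂p := fun t t' htt' =>
  have := hp.neZero
  integral_lt_integral_of_ae_lt (hF.integrable_one_sub hp t') (hF.integrable_one_sub hp t)
    (hp.ae_pos.mono fun u hu => sub_lt_sub_left ((hF.1 u hu).2.1 htt') 1)

lemma eContinuous (hF : IsCDFfam F)
    (hWF : ∀ p, MemDelta k p → ∀ e ∈ Ioi (0:ℝ), W e p = 1 - F e (s p)) : EContinuous k W :=
  fun p hp => (continuousOn_const.sub (hF.2 (s p)).1).congr (hWF p hp)

lemma csfMonotone (hF : IsCDFfam F)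
    (hWF : ∀ p, MemDelta k p → ∀ e ∈ Ioi (0:ℝ), W e p = 1 - F e (s p)) : CSFMonotone k W := by
  intro p hp
  refine ⟨fun a ha b hb hab => ?_, ?_⟩
  · simp only [hWF p hp a ha, hWF p hp b hb]
    linarith [(hF.2 (s p)).2.1 ha hb hab]
  · have hlim : Tendsto (fun e => 1 - F e (s p)) atTop (𝓝 (1 - 0)) :=
      tendsto_const_nhds.sub (hF.2 (s p)).2.2
    rw [sub_zero] at hlim
    refine hlim.congr' ?_
    filter_upwards [eventually_gt_atTop 0] with e he
    exact (hWF p hp e he).symm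

lemma coMonotone (hF : IsCDFfam F)
    (hWF : ∀ p, MemDelta k p → ∀ e ∈ Ioi (0:ℝ), W e p = 1 - F e (s p)) : CoMonotone k W := by
  intro e he e' he' p p' hp hp' hle
  rw [hWF p hp e he, hWF p' hp' e he, sub_le_sub_iff_left] at hle
  rw [hWF p hp e' he', hWF p' hp' e' he', sub_le_sub_iff_left]
  exact (hF.1 e' he').2.1.monotone ((hF.1 e he).2.1.le_iff_le.1 hle)

/-- On `δ_b` the cutoff solves `F b s = 1 - k`; since `F b x → 0` as `b → ∞` for every fixed `x`,
the cutoff is pushed to `+∞`, where every `F e` tends to `1`. -/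
lemma csfCompetitive (hk : k < 1) (hF : IsCDFfam F)
    (hs : ∀ p, MemDelta k p → ∫ u, (1 - F u (s p)) ∂p = k)
    (hWF : ∀ p, MemDelta k p → ∀ e ∈ Ioi (0:ℝ), W e p = 1 - F e (s p)) :
    CSFCompetitive k W := by
  intro e he
  have hcut : ∀ b > 0, F b (s (Measure.dirac b)) = 1 - k := fun b hb => by
    have := hs _ (memDelta_dirac hk hb)
    rw [integral_dirac] at this
    linarith
  have hs_top : Tendsto (fun b => s (Measure.dirac b)) atTop atTop := by
    refine tendsto_atTop.2 fun x => ?_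
    filter_upwards [eventually_gt_atTop 0,
      (hF.2 x).2.2.eventually_lt_const (sub_pos.2 hk)] with b hb hFb
    exact ((hF.1 b hb).2.1.lt_iff_lt.1 (hcut b hb ▸ hFb)).le
  have hF_one : Tendsto (fun b => 1 - F e (s (Measure.dirac b))) atTop (𝓝 (1 - 1)) :=
    tendsto_const_nhds.sub ((hF.1 e he).2.2.2.comp hs_top)
  rw [sub_self] at hF_one
  refine hF_one.congr' ?_
  filter_upwards [eventually_gt_atTop 0] with b hb
  exact (hWF _ (memDelta_dirac hk hb) e he).symm

lemma pContinuousCSF (hF : IsCDFfam F)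
    (hs : ∀ p, MemDelta k p → ∫ u, (1 - F u (s p)) ∂p = k)
    (hWF : ∀ p, MemDelta k p → ∀ e ∈ Ioi (0:ℝ), W e p = 1 - F e (s p)) :
    PContinuousCSF k W := by
  intro e he p p' hp hp'
  have hmix : ∀ α ∈ Icc (0:ℝ) 1, MemDelta k (mix α p p') := fun α hα => memDelta_mix hp hp' hα
  have hcut : ContinuousOn (fun α => s (mix α p p')) (Icc 0 1) := by
    refine continuousOn_of_strictAnti_of_apply_eq
      (G := fun α t => ∫ u, (1 - F u t) ∂(mix α p p'))
      (fun α hα => hF.strictAnti_integral_one_sub (hmix α hα)) (fun t => ?_)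
      (fun α hα => hs _ (hmix α hα))
    have : ContinuousOn (fun α : ℝ => α * ∫ u, (1 - F u t) ∂p + (1 - α) * ∫ u, (1 - F u t) ∂p')
        (Icc 0 1) := by fun_prop
    exact this.congr fun α hα =>
      integral_mix (hF.integrable_one_sub hp t) (hF.integrable_one_sub hp' t) hα
  exact (continuousOn_const.sub ((hF.1 e he).1.comp_continuousOn hcut)).congr
    fun α hα => hWF _ (hmix α hα) e he

end IsCDFfam

section Backward

variable {k : ℝ} {W : ℝ → Measure ℝ → ℝ} {p p' : Measure ℝ} {e₀ e : ℝ}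

lemma CoMonotone.eq_of_eq (hCo : CoMonotone k W) (hp : MemDelta k p) (hp' : MemDelta k p')
    (he₀ : 0 < e₀) (he : 0 < e) (h : W e₀ p = W e₀ p') : W e p = W e p' :=
  le_antisymm (hCo e₀ he₀ e he p' p hp' hp h.le) (hCo e₀ he₀ e he p p' hp hp' h.ge)

lemma CoMonotone.lt_of_lt (hCo : CoMonotone k W) (hp : MemDelta k p) (hp' : MemDelta k p')
    (he₀ : 0 < e₀) (he : 0 < e) (h : W e₀ p < W e₀ p') : W e p < W e p' :=
  lt_of_not_ge fun hle => h.not_ge (hCo e he e₀ he₀ p p' hp hp' hle)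

lemma CSFMonotone.mem_Ioo (hM : CSFMonotone k W) (hW : IsCSF k W) (hp : MemDelta k p)
    (he : 0 < e) : W e p ∈ Ioo 0 1 :=
  ⟨((hW p hp).1 (e / 2) (half_pos he)).1.trans_lt ((hM p hp).1 (half_pos he) he (half_lt_self he)),
    ((hM p hp).1 he (by linarith : 0 < e + 1) (lt_add_one e)).trans_le
      ((hW p hp).1 (e + 1) (by linarith : 0 < e + 1)).2⟩

lemma IsCSF.mul_apply_smul_dirac (hW : IsCSF k W) (hk : 0 ≤ k) {b c : ℝ} (hb : 0 < b)
    (hkc : k < c) (hc : c ≤ 1) : c * W b (ENNReal.ofReal c • Measure.dirac b) = k := by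
  have := (hW _ (memDelta_smul_dirac hk hb hkc hc)).2.2
  rwa [integral_smul_measure, integral_dirac, ENNReal.toReal_ofReal (hk.trans hkc.le),
    smul_eq_mul] at this

/-- A mass `c` slightly above `k` placed at `e / 2` gets the share `k / c` there, which is close to
`1`; by monotonicity the share at `e` is larger still. -/
lemma IsCSF.exists_lt_apply (hW : IsCSF k W) (hM : CSFMonotone k W) (hk : k ∈ Ioo 0 1)
    (he : 0 < e) {y : ℝ} (hy : y < 1) : ∃ p, MemDelta k p ∧ y < W e p := by
  set z := max y k
  have hz : 0 < 1 + z := by linarith [le_max_right y k, hk.1]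
  set c := 2 * k / (1 + z)
  have hkc : k < c := by
    rw [lt_div_iff₀ hz]
    nlinarith [max_lt hy hk.2, hk.1]
  have hc1 : c ≤ 1 := by
    rw [div_le_one hz]
    linarith [le_max_right y k, hk.2]
  have hmem := memDelta_smul_dirac hk.1.le (half_pos he) hkc hc1
  have hshare : 2 * W (e / 2) (ENNReal.ofReal c • Measure.dirac (e / 2)) = 1 + z := by
    have hWc := hW.mul_apply_smul_dirac hk.1.le (half_pos he) hkc hc1
    have hc : c * (1 + z) = 2 * k := div_mul_cancel₀ _ hz.ne'
    refine mul_left_cancel₀ (hk.1.trans hkc).ne' ?_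
    linear_combination 2 * hWc - hc
  refine ⟨_, hmem, ?_⟩
  have := (hM _ hmem).1 (half_pos he) he (half_lt_self he)
  linarith [le_max_left y k, max_lt hy hk.2]

lemma CSFCompetitive.exists_apply_lt (hC : CSFCompetitive k W) (hk : k < 1) (he : 0 < e)
    {y : ℝ} (hy : 0 < y) : ∃ p, MemDelta k p ∧ W e p < y := by
  obtain ⟨b, hb, hWb⟩ := ((eventually_gt_atTop 0).and ((hC e he).eventually_lt_const hy)).exists
  exact ⟨_, memDelta_dirac hk hb, hWb⟩

lemma exists_memDelta_apply_eq (hk : k ∈ Ioo 0 1) (hW : IsCSF k W) (hP : PContinuousCSF k W)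
    (hM : CSFMonotone k W) (hC : CSFCompetitive k W) (he : 0 < e) {t : ℝ} (ht : t ∈ Ioo 0 1) :
    ∃ p, MemDelta k p ∧ W e p = t := by
  obtain ⟨p₁, hp₁, hlt₁⟩ := hW.exists_lt_apply hM hk he ht.2
  obtain ⟨p₀, hp₀, hlt₀⟩ := hC.exists_apply_lt hk.2 he ht.1
  have hmem : t ∈ Icc (W e (mix 0 p₁ p₀)) (W e (mix 1 p₁ p₀)) := by
    simpa [mix] using ⟨hlt₀.le, hlt₁.le⟩
  obtain ⟨α, hα, hαt⟩ := intermediate_value_Icc zero_le_one (hP e he p₁ p₀ hp₁ hp₀) hmem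
  exact ⟨_, memDelta_mix hp₁ hp₀ hα, hαt⟩

variable {q : ℝ → Measure ℝ}

lemma CoMonotone.exists_eqOn_Ioi (hCo : CoMonotone k W) (hW : IsCSF k W) (hM : CSFMonotone k W)
    (hq : ∀ x, MemDelta k (q x)) (hWq : ∀ x, W 1 (q x) = 1 - Real.sigmoid x)
    (hp : MemDelta k p) : ∃ x, EqOn (W · p) (W · (q x)) (Ioi 0) := by
  have hp01 := hM.mem_Ioo hW hp one_pos
  obtain ⟨x, hx⟩ : 1 - W 1 p ∈ range Real.sigmoid := by
    rw [Real.range_sigmoid]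
    constructor <;> linarith [hp01.1, hp01.2]
  exact ⟨x, fun e he => hCo.eq_of_eq hp (hq x) one_pos he (by rw [hWq, hx, sub_sub_cancel])⟩

lemma isCDF_one_sub_apply (hk : k ∈ Ioo 0 1) (hW : IsCSF k W) (hP : PContinuousCSF k W)
    (hM : CSFMonotone k W) (hC : CSFCompetitive k W) (hCo : CoMonotone k W)
    (hq : ∀ x, MemDelta k (q x)) (hWq : ∀ x, W 1 (q x) = 1 - Real.sigmoid x) (he : 0 < e) :
    IsCDF fun x => 1 - W e (q x) := by
  refine isCDF_of_strictMono_of_range_eq (fun x y hxy => ?_) (Set.ext fun y => ⟨?_, fun hy => ?_⟩)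
  · have h1 : W 1 (q y) < W 1 (q x) := by
      rw [hWq, hWq]
      exact sub_lt_sub_left (Real.sigmoid_strictMono hxy) 1
    exact sub_lt_sub_left (hCo.lt_of_lt (hq y) (hq x) one_pos he h1) 1
  · rintro ⟨x, rfl⟩
    have := hM.mem_Ioo hW (hq x) he
    constructor <;> linarith [this.1, this.2]
  · obtain ⟨p, hp, hWp⟩ := exists_memDelta_apply_eq hk hW hP hM hC he (t := 1 - y)
      ⟨by linarith [hy.2], by linarith [hy.1]⟩
    obtain ⟨x, hx⟩ := hCo.exists_eqOn_Ioi hW hM hq hWq hp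
    exact ⟨x, by simp only [← hx he, hWp, sub_sub_cancel]⟩

end Backward

/-- The levels of `W 1 ·` are indexed by `x ∈ ℝ` through `W 1 (q x) = 1 - sigmoid x`, which
normalises `F 1` to the logistic CDF. -/
theorem isRPF_of_axioms {k : ℝ} {W : ℝ → Measure ℝ → ℝ} (hk : k ∈ Ioo 0 1) (hW : IsCSF k W)
    (hE : EContinuous k W) (hP : PContinuousCSF k W) (hM : CSFMonotone k W)
    (hC : CSFCompetitive k W) (hCo : CoMonotone k W) : IsRPF k W := by
  choose q hq hWq using fun x => exists_memDelta_apply_eq hk hW hP hM hC one_pos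
    (t := 1 - Real.sigmoid x) ⟨sub_pos.2 (Real.sigmoid_lt_one x), by linarith [Real.sigmoid_pos x]⟩
  refine ⟨fun e x => 1 - W e (q x), ⟨fun e he =>
    isCDF_one_sub_apply hk hW hP hM hC hCo hq hWq he, fun x => ?_⟩, fun p hp => ?_⟩
  · refine ⟨continuousOn_const.sub (hE _ (hq x)),
      fun a ha b hb hab => sub_lt_sub_left ((hM _ (hq x)).1 ha hb hab) 1, ?_⟩
    simpa using (tendsto_const_nhds (x := (1 : ℝ))).sub (hM _ (hq x)).2
  · obtain ⟨x, hx⟩ := hCo.exists_eqOn_Ioi hW hM hq hWq hp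
    have hrep : ∀ e ∈ Ioi (0:ℝ), W e p = 1 - (1 - W e (q x)) := fun e he => by
      rw [sub_sub_cancel]
      exact hx he
    exact ⟨x, by rw [← hp.integral_congr hrep]; exact (hW p hp).2.2, hrep⟩

/-- a CSF is a Random Performance Function if and only if it
satisfies e-Continuity, p-Continuity, Monotonicity, Competitiveness, and
Co-monotonicity (Theorem 1). -/
theorem rpf_characterization (k : ℝ) (hk : k ∈ Set.Ioo (0:ℝ) 1)
    (W : ℝ → MeasureTheory.Measure ℝ → ℝ) (hW : IsCSF k W) :
    IsRPF k W ↔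
      EContinuous k W ∧ PContinuousCSF k W ∧ CSFMonotone k W ∧
      CSFCompetitive k W ∧ CoMonotone k W := by
  refine ⟨fun ⟨F, hF, hrep⟩ => ?_,
    fun ⟨hE, hP, hM, hC, hCo⟩ => isRPF_of_axioms hk hW hE hP hM hC hCo⟩
  choose! s hs hWs using hrep
  exact ⟨hF.eContinuous hWs, hF.pContinuousCSF hs hWs, hF.csfMonotone hWs,
    hF.csfCompetitive hk.2 hs hWs, hF.coMonotone hWs⟩
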